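/- Suppose ε = 1, and let V = a(e₁ + e₃) for some a ∈ ℝ. Then the rough Laplacian satisfies ∇*∇V = −(13/4)A²·V; in particular, V is a critical point for the energy functional restricted to left-invariant vector fields of the same length (i.e., ∇*∇V is collinear to V). -/

import Mathlib

/-!
In the pseudo-orthonormal frame the Koszul formula expresses the Christoffel symbols through the
structure constants, and the rough Laplacian of `∑ⱼ vⱼ eⱼ` becomes a polynomial in `v` and these
symbols. For this algebra with `ε = 1`, evaluating it at `v = (a, 0, a, 0)` gives `-(13/4) A² v`.
-/

open Finset

section PseudoOrthonormal

variable {ι R G : Type*} [Fintype ι] [DecidableEq ι] [CommRing R] [AddCommGroup G] [Module R G]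
  {g : G →ₗ[R] G →ₗ[R] R} {s : ι → R}

theorem apply_sum_smul_of_pseudoOrthonormal {e : ι → G}
    (hg : ∀ i j, g (e i) (e j) = if i = j then s i else 0) (c : ι → R) (l : ι) :
    g (∑ k, c k • e k) (e l) = c l * s l := by
  simp [map_sum, hg]

theorem eq_sum_smul_of_pseudoOrthonormal (b : Module.Basis ι R G)
    (hg : ∀ i j, g (b i) (b j) = if i = j then s i else 0) (hs : ∀ i, s i * s i = 1) (X : G) :
    X = ∑ k, (s k * g X (b k)) • b k := by
  have hcoord : ∀ k, s k * g X (b k) = b.repr X k := fun k => by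
    conv_lhs => rw [← b.sum_repr X]
    rw [apply_sum_smul_of_pseudoOrthonormal hg, mul_left_comm, hs, mul_one]
  simp_rw [hcoord, b.sum_repr]

end PseudoOrthonormal

section Koszul

variable {ι G : Type*} [Fintype ι] [DecidableEq ι] [AddCommGroup G] [Module ℝ G]

/-- Koszul's formula with `g([eᵢ, eⱼ], eₖ) = s k * C i j k`, the index `k` raised by `s k`. -/
noncomputable def christoffel (s : ι → ℝ) (C : ι → ι → ι → ℝ) (i j k : ι) : ℝ :=
  (C i j k - s k * s i * C j k i + s k * s j * C k i j) / 2

theorem nabla_eq_sum_christoffel (b : Module.Basis ι ℝ G) {g : G →ₗ[ℝ] G →ₗ[ℝ] ℝ} {s : ι → ℝ}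
    (hg : ∀ i j, g (b i) (b j) = if i = j then s i else 0) (hs : ∀ i, s i * s i = 1)
    {lie nabla : G →ₗ[ℝ] G →ₗ[ℝ] G} {C : ι → ι → ι → ℝ}
    (hC : ∀ i j, lie (b i) (b j) = ∑ k, C i j k • b k)
    (hK : ∀ X Y Z, 2 * g (nabla X Y) Z = g (lie X Y) Z - g (lie Y Z) X + g (lie Z X) Y)
    (i j : ι) : nabla (b i) (b j) = ∑ k, christoffel s C i j k • b k := by
  rw [eq_sum_smul_of_pseudoOrthonormal b hg hs (nabla (b i) (b j))]
  refine sum_congr rfl fun k _ => congrArg (· • b k) ?_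
  have hKk := hK (b i) (b j) (b k)
  simp only [hC, apply_sum_smul_of_pseudoOrthonormal hg] at hKk
  rw [christoffel]
  linear_combination (s k / 2) * hKk + (C i j k / 2) * hs k

end Koszul

section RoughLaplacian

variable {ι R G : Type*} [Fintype ι] [CommRing R] [AddCommGroup G] [Module R G]

theorem sum_smul_sum_smul (a : ι → R) (c : ι → ι → R) (e : ι → G) :
    ∑ k, a k • ∑ l, c k l • e l = ∑ l, (∑ k, a k * c k l) • e l := by
  simp only [smul_sum, smul_smul, sum_smul]
  exact sum_comm

def roughLaplacian (e : ι → G) (s : ι → R) (nabla : G →ₗ[R] G →ₗ[R] G) (V : G) : G :=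
  ∑ i, s i • (nabla (e i) (nabla (e i) V) - nabla (nabla (e i) (e i)) V)

def roughLaplacianCoeff (s : ι → R) (Γ : ι → ι → ι → R) (v : ι → R) (l : ι) : R :=
  ∑ i, s i * (∑ k, (∑ j, v j * Γ i j k) * Γ i k l - ∑ k, Γ i i k * ∑ j, v j * Γ k j l)

variable {e : ι → G} {nabla : G →ₗ[R] G →ₗ[R] G} {Γ : ι → ι → ι → R}

theorem nabla_sum_smul (hΓ : ∀ i j, nabla (e i) (e j) = ∑ k, Γ i j k • e k) (i : ι) (v : ι → R) :
    nabla (e i) (∑ j, v j • e j) = ∑ k, (∑ j, v j * Γ i j k) • e k := by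
  simp only [map_sum, map_smul, hΓ, sum_smul_sum_smul]

theorem nabla_sum_smul_sum_smul (hΓ : ∀ i j, nabla (e i) (e j) = ∑ k, Γ i j k • e k)
    (u v : ι → R) :
    nabla (∑ i, u i • e i) (∑ j, v j • e j) = ∑ k, (∑ i, u i * ∑ j, v j * Γ i j k) • e k := by
  rw [map_sum nabla, LinearMap.sum_apply]
  simp only [LinearMap.map_smul₂, nabla_sum_smul hΓ, sum_smul_sum_smul]

theorem roughLaplacian_sum_smul (hΓ : ∀ i j, nabla (e i) (e j) = ∑ k, Γ i j k • e k)
    (s v : ι → R) :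
    roughLaplacian e s nabla (∑ j, v j • e j) = ∑ l, roughLaplacianCoeff s Γ v l • e l := by
  simp only [roughLaplacian, roughLaplacianCoeff, hΓ, nabla_sum_smul_sum_smul hΓ,
    nabla_sum_smul hΓ, ← sum_sub_distrib, ← sub_smul, sum_smul_sum_smul]

end RoughLaplacian

noncomputable section Example

/-- Column `i < 3` holds the coordinates of `[eᵢ, e₃]`, indices counted from `0`: the algebra is the
semidirect product of the abelian ideal spanned by `e₀, e₁, e₂` with `ℝ e₃`. -/
def bracketMatrix (A ε : ℝ) : Matrix (Fin 4) (Fin 4) ℝ :=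
  !![5 * A / 2, 0, 0, 0; 0, A, 0, 0; 3 * ε * A, 0, -(A / 2), 0; 0, 0, 0, 0]

def structConst (A ε : ℝ) (i j k : Fin 4) : ℝ :=
  (if j = 3 then bracketMatrix A ε k i else 0) - (if i = 3 then bracketMatrix A ε k j else 0)

def metricSign (i : Fin 4) : ℝ := if i = 2 then -1 else 1

theorem metricSign_mul_self (i : Fin 4) : metricSign i * metricSign i = 1 := by
  unfold metricSign; split_ifs <;> norm_num

theorem lie_eq_sum_structConst {G : Type*} [AddCommGroup G] [Module ℝ G] (e : Fin 4 → G)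
    (lie : G →ₗ[ℝ] G →ₗ[ℝ] G) (A ε : ℝ) (hanti : ∀ X Y : G, lie X Y = - lie Y X)
    (h12 : lie (e 0) (e 1) = 0)
    (h13 : lie (e 0) (e 2) = 0)
    (h14 : lie (e 0) (e 3) = (5 * A / 2) • e 0 + (3 * ε * A) • e 2)
    (h23 : lie (e 1) (e 2) = 0)
    (h24 : lie (e 1) (e 3) = A • e 1)
    (h34 : lie (e 2) (e 3) = (-(A / 2)) • e 2) (i j : Fin 4) :
    lie (e i) (e j) = ∑ k, structConst A ε i j k • e k := by
  have hself : ∀ X, lie X X = 0 := fun X => by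
    have h2 : (2 : ℝ) • lie X X = 0 := by rw [two_smul]; nth_rw 1 [hanti]; exact neg_add_cancel _
    simpa using h2
  fin_cases i <;> fin_cases j <;>
    simp [structConst, bracketMatrix, Fin.sum_univ_four, hself, h12, h13, h14, h23, h24, h34,
      hanti (e 1) (e 0), hanti (e 2) (e 0), hanti (e 3) (e 0), hanti (e 2) (e 1),
      hanti (e 3) (e 1), hanti (e 3) (e 2)]

theorem roughLaplacianCoeff_christoffel_structConst (A a : ℝ) :
    roughLaplacianCoeff metricSign (christoffel metricSign (structConst A 1)) ![a, 0, a, 0]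
      = (-(13 / 4) * A ^ 2) • ![a, 0, a, 0] := by
  funext l
  fin_cases l <;>
    simp [roughLaplacianCoeff, christoffel, structConst, bracketMatrix, metricSign,
      Fin.sum_univ_four] <;> ring

end Example

theorem stmt_10_general {G : Type*} [AddCommGroup G] [Module ℝ G]
    (e : Module.Basis (Fin 4) ℝ G)
    (lie : G →ₗ[ℝ] G →ₗ[ℝ] G)
    (g : G →ₗ[ℝ] G →ₗ[ℝ] ℝ)
    (nabla : G →ₗ[ℝ] G →ₗ[ℝ] G)
    (A ε a : ℝ) (hε : ε = 1)
    (hanti : ∀ X Y : G, lie X Y = - lie Y X)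
    (h12 : lie (e 0) (e 1) = 0)
    (h13 : lie (e 0) (e 2) = 0)
    (h14 : lie (e 0) (e 3) = (5 * A / 2) • e 0 + (3 * ε * A) • e 2)
    (h23 : lie (e 1) (e 2) = 0)
    (h24 : lie (e 1) (e 3) = A • e 1)
    (h34 : lie (e 2) (e 3) = (-(A / 2)) • e 2)
    (hg : ∀ i j : Fin 4, g (e i) (e j) = if i = j then (if i = 2 then (-1 : ℝ) else 1) else 0)
    (hK : ∀ X Y Z : G, 2 * g (nabla X Y) Z = g (lie X Y) Z - g (lie Y Z) X + g (lie Z X) Y) :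
    (let eps : Fin 4 → ℝ := fun i => if i = (2 : Fin 4) then (-1 : ℝ) else 1
     let lap : G → G := fun V : G => ∑ i : Fin 4, eps i • (nabla (e i) (nabla (e i) V) - nabla (nabla (e i) (e i)) V)
     let V : G := a • (e 0 + e 2)
     lap V = (-(13 / 4) * A ^ 2) • V ∧ ∃ lam : ℝ, lap V = lam • V) := by
  subst hε
  intro eps lap V
  have hΓ := nabla_eq_sum_christoffel e (s := metricSign) hg metricSign_mul_self
    (lie_eq_sum_structConst e lie A 1 hanti h12 h13 h14 h23 h24 h34) hK
  have hV : V = ∑ j, ![a, 0, a, 0] j • e j := by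
    simp [V, Fin.sum_univ_four]
  have key : lap V = (-(13 / 4) * A ^ 2) • V := by
    change roughLaplacian e metricSign nabla V = _
    rw [hV, roughLaplacian_sum_smul hΓ, roughLaplacianCoeff_christoffel_structConst, smul_sum]
    simp only [Pi.smul_apply, smul_eq_mul, smul_smul]
  exact ⟨key, _, key⟩

theorem stmt_10 {G : Type*} [AddCommGroup G] [Module ℝ G]
    (e : Module.Basis (Fin 4) ℝ G)
    (lie : G →ₗ[ℝ] G →ₗ[ℝ] G)
    (g : G →ₗ[ℝ] G →ₗ[ℝ] ℝ)
    (nabla : G →ₗ[ℝ] G →ₗ[ℝ] G)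
    (A ε a : ℝ) (hε : ε = 1)
    (hanti : ∀ X Y : G, lie X Y = - lie Y X)
    (h12 : lie (e 0) (e 1) = 0)
    (h13 : lie (e 0) (e 2) = 0)
    (h14 : lie (e 0) (e 3) = (5 * A / 2) • e 0 + (3 * ε * A) • e 2)
    (h23 : lie (e 1) (e 2) = 0)
    (h24 : lie (e 1) (e 3) = A • e 1)
    (h34 : lie (e 2) (e 3) = (-(A / 2)) • e 2)
    (hg : ∀ i j : Fin 4, g (e i) (e j) = if i = j then (if i = 2 then (-1 : ℝ) else 1) else 0)
    (hgsymm : ∀ X Y : G, g X Y = g Y X)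
    (hK : ∀ X Y Z : G, 2 * g (nabla X Y) Z = g (lie X Y) Z - g (lie Y Z) X + g (lie Z X) Y) :
    (let eps : Fin 4 → ℝ := fun i => if i = (2 : Fin 4) then (-1 : ℝ) else 1
     let lap : G → G := fun V : G => ∑ i : Fin 4, eps i • (nabla (e i) (nabla (e i) V) - nabla (nabla (e i) (e i)) V)
     let V : G := a • (e 0 + e 2)
     lap V = (-(13 / 4) * A ^ 2) • V ∧ ∃ lam : ℝ, lap V = lam • V) :=
  stmt_10_general e lie g nabla A ε a hε hanti h12 h13 h14 h23 h24 h34 hg hK
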